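/- arXiv:2212.07265 — 2 statements merged into one kernel-verified Lean document; each statement's English description precedes it below -/
import Mathlib

section
/- Let G be a cyclic group of prime order q with generator g, and let h = g^x for some x ∈ ℤ/qℤ. Let a₀, …, a_{t−1}, b₀, …, b_{t−1} ∈ ℤ/qℤ, set f(X) = Σⱼ aⱼ Xʲ and g(X) = Σⱼ bⱼ Xʲ, and let Eⱼ = g^{aⱼ} h^{bⱼ}. If a claimed share (s′, r′) ∈ (ℤ/qℤ)² passes the verification at index i, i.e. g^{s′} h^{r′} = Π_{j=0}^{t−1} (Eⱼ)^{(iʲ)}, then s′ + x·r′ = f(i) + x·g(i) in ℤ/qℤ. -/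
/-- Soundness relation of the Verify check in Pedersen's VSS: in a cyclic group
of prime order `q` generated by `g` with `h = g^x`, any claimed share `(s', r')`
passing verification at index `i` satisfies `s' + x r' = f(i) + x g(i)`. -/
theorem vss_verify_sound (q : ℕ) (hq : Nat.Prime q) (G : Type*) [CommGroup G]
    [Fintype G] (hcard : Fintype.card G = q)
    (g : G) (hg : ∀ y : G, y ∈ Subgroup.zpowers g)
    (x : ZMod q) (h : G) (hh : h = g ^ x.val)
    (t : ℕ) (a b : Fin t → ZMod q) (E : Fin t → G)
    (hE : ∀ j, E j = g ^ (a j).val * h ^ (b j).val)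
    (i : ℕ) (s' r' : ZMod q)
    (hver : g ^ s'.val * h ^ r'.val = ∏ j, (E j) ^ (i ^ (j : ℕ))) :
    s' + x * r' =
      (∑ j, a j * (i : ZMod q) ^ (j : ℕ)) +
        x * (∑ j, b j * (i : ZMod q) ^ (j : ℕ)) := by
  have hord : orderOf g = q := by
    rw [orderOf_eq_card_of_forall_mem_zpowers hg, Nat.card_eq_fintype_card, hcard]
  have key : g ^ (s'.val + x.val * r'.val)
      = g ^ (∑ j, ((a j).val + x.val * (b j).val) * i ^ (j : ℕ)) := by
    rw [pow_add, pow_mul, ← hh, hver, ← Finset.prod_pow_eq_pow_sum]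
    refine Finset.prod_congr rfl fun j _ => ?_
    simp only [hE j, hh, mul_pow, ← pow_mul, ← pow_add]
  haveI : NeZero q := ⟨hq.pos.ne'⟩
  have hmod : ((s'.val + x.val * r'.val : ℕ) : ZMod q)
      = ((∑ j, ((a j).val + x.val * (b j).val) * i ^ (j : ℕ) : ℕ) : ZMod q) := by
    rw [ZMod.natCast_eq_natCast_iff]
    have h2 := (pow_eq_pow_iff_modEq).mp key
    rwa [hord] at h2
  push_cast at hmod
  simp only [ZMod.natCast_val, ZMod.cast_id] at hmod
  rw [Finset.mul_sum, ← Finset.sum_add_distrib]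
  rw [hmod]
  exact Finset.sum_congr rfl fun j _ => by ring
end

section
/- Let G be a cyclic group of prime order q, let g be a generator of G, and let h = g^x where x ∈ ℤ/qℤ is nonzero (so h is also a generator). Then the Pedersen commitment E(a, b) = g^a · h^b (with exponents in ℤ/qℤ) is perfectly hiding: for all s, s′, r ∈ ℤ/qℤ there exists r′ ∈ ℤ/qℤ such that g^s · h^r = g^{s′} · h^{r′}; explicitly, r′ = r + (s − s′)·x⁻¹. -/
/-- Perfect hiding of the Pedersen commitment: in a cyclic group of prime
order `q` with generator `g` and `h = g^x` (`x ≠ 0`), every commitment value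
`g^s h^r` is also a commitment to any other secret `s'`, with blinding
`r' = r + (s − s')·x⁻¹`. -/
theorem pedersen_perfectly_hiding (q : ℕ) (hq : Nat.Prime q) (G : Type*)
    [CommGroup G] [Fintype G] (hcard : Fintype.card G = q)
    (g : G) (hg : ∀ y : G, y ∈ Subgroup.zpowers g)
    (x : ZMod q) (hx : x ≠ 0) (h : G) (hh : h = g ^ x.val) :
    ∀ s s' r : ZMod q, ∃ r' : ZMod q,
      g ^ s.val * h ^ r.val = g ^ s'.val * h ^ r'.val ∧
        r' = r + (s - s') * x⁻¹ := by
  haveI : Fact (Nat.Prime q) := ⟨hq⟩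
  intro s s' r
  refine ⟨r + (s - s') * x⁻¹, ?_, rfl⟩
  have horder : orderOf g = q := by
    rw [orderOf_eq_card_of_forall_mem_zpowers hg, Nat.card_eq_fintype_card, hcard]
  have hcong : ∀ a b : ZMod q, ((a : ZMod q) = b) → g ^ a.val = g ^ b.val := by
    intro a b hab
    rw [pow_eq_pow_iff_modEq, horder, ← ZMod.natCast_eq_natCast_iff]
    simpa [ZMod.natCast_val, ZMod.cast_id] using hab
  have hmul : ∀ a b : ZMod q, g ^ a.val * g ^ b.val = g ^ (a + b).val := by
    intro a b
    rw [← pow_add, pow_eq_pow_iff_modEq, horder, ← ZMod.natCast_eq_natCast_iff]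
    push_cast [ZMod.natCast_val, ZMod.cast_id]
    ring
  have hpow : ∀ a b : ZMod q, (g ^ a.val) ^ b.val = g ^ (a * b).val := by
    intro a b
    rw [← pow_mul, pow_eq_pow_iff_modEq, horder, ← ZMod.natCast_eq_natCast_iff]
    push_cast [ZMod.natCast_val, ZMod.cast_id]
    ring
  rw [hh, hpow, hpow, hmul, hmul]
  apply hcong
  field_simp
  ring
end
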